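/- arXiv:2204.12136 — 9 statements merged into one kernel-verified Lean document; each statement's English description precedes it below -/
import Mathlib

section
/- Let λ, μ, γ > 0, ξ ≥ 0, 𝔫 ≥ 1, and consider the recurrence λ(i+𝔫)a_{i+1} = −ξ + (λ+μ+γ)(i+𝔫)a_i − μ(i+𝔫)a_{i-1} for i ≥ 1 with a_0 = 0. If (a_i) and (a_i') are two solutions with initial values a_1 = x and a_1' = x' where x > x', then the difference Δ_i = a_i − a_i' satisfies the homogeneous recurrence λΔ_{i+1} = (λ+μ+γ)Δ_i − μΔ_{i-1}, is non-decreasing, and tends to ∞. -/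
/-!
The difference `Δ = a - a'` of two solutions solves the homogeneous recurrence, which can be
rewritten as `λ (Δ_{i+2} - Δ_{i+1}) = μ (Δ_{i+1} - Δ_i) + γ Δ_{i+1}`. Starting from
`Δ_0 = 0 < Δ_1`, induction shows that `Δ` is non-negative and non-decreasing, and then every
increment is at least `γ Δ_1 / λ > 0`, so `Δ` grows at least linearly.
-/

open Filter

section WeightedRecurrence

variable {lm mu gm : ℝ}

theorem sub_solves_homogeneous (w f a a' : ℕ → ℝ) (hw : ∀ i, w i ≠ 0)
    (ha : ∀ i, lm * w i * a (i + 2) = f i + (lm + mu + gm) * w i * a (i + 1) - mu * w i * a i)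
    (ha' : ∀ i, lm * w i * a' (i + 2) = f i + (lm + mu + gm) * w i * a' (i + 1) - mu * w i * a' i)
    (i : ℕ) :
    lm * (a (i + 2) - a' (i + 2))
      = (lm + mu + gm) * (a (i + 1) - a' (i + 1)) - mu * (a i - a' i) :=
  mul_left_cancel₀ (hw i) (by linear_combination ha i - ha' i)

end WeightedRecurrence

section HomogeneousRecurrence

variable {lm mu gm : ℝ} {d : ℕ → ℝ}
  (hrec : ∀ i, lm * d (i + 2) = (lm + mu + gm) * d (i + 1) - mu * d i)
include hrec

theorem increment_eq (i : ℕ) :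
    lm * (d (i + 2) - d (i + 1)) = mu * (d (i + 1) - d i) + gm * d (i + 1) := by
  linear_combination hrec i

theorem monotone_of_homogeneous (hl : 0 < lm) (hm : 0 ≤ mu) (hg : 0 ≤ gm)
    (h0 : 0 ≤ d 0) (h01 : d 0 ≤ d 1) : Monotone d := by
  have step : ∀ i, 0 ≤ d i ∧ d i ≤ d (i + 1) := by
    intro i
    induction i with
    | zero => exact ⟨h0, h01⟩
    | succ k ih =>
      have hpos : 0 ≤ d (k + 1) := ih.1.trans ih.2
      have hinc : 0 ≤ lm * (d (k + 2) - d (k + 1)) := by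
        rw [increment_eq hrec]
        exact add_nonneg (mul_nonneg hm (sub_nonneg.2 ih.2)) (mul_nonneg hg hpos)
      exact ⟨hpos, sub_nonneg.1 (nonneg_of_mul_nonneg_right hinc hl)⟩
  exact monotone_nat_of_le_succ fun i => (step i).2

theorem linear_lower_bound (hl : 0 < lm) (hm : 0 ≤ mu) (hg : 0 ≤ gm) (hmono : Monotone d)
    (i : ℕ) : d 1 + i * (gm * d 1 / lm) ≤ d (i + 1) := by
  induction i with
  | zero => simp
  | succ k ih =>
    have hinc : gm * d 1 ≤ lm * (d (k + 2) - d (k + 1)) := by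
      rw [increment_eq hrec]
      have hmu := mul_nonneg hm (sub_nonneg.2 (hmono k.le_succ))
      linarith [mul_le_mul_of_nonneg_left (hmono (Nat.le_add_left 1 k)) hg]
    have hstep : gm * d 1 / lm ≤ d (k + 2) - d (k + 1) := by
      rw [div_le_iff₀ hl]
      linarith
    push_cast
    linarith

theorem tendsto_atTop_of_homogeneous (hl : 0 < lm) (hm : 0 ≤ mu) (hg : 0 < gm)
    (hmono : Monotone d) (h1 : 0 < d 1) : Tendsto d atTop atTop := by
  have hc : 0 < gm * d 1 / lm := div_pos (mul_pos hg h1) hl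
  have hlin : Tendsto (fun i : ℕ => d 1 + i * (gm * d 1 / lm)) atTop atTop :=
    tendsto_atTop_add_const_left _ _ (tendsto_natCast_atTop_atTop.atTop_mul_const hc)
  exact (tendsto_add_atTop_iff_nat 1).1
    (tendsto_atTop_mono (linear_lower_bound hrec hl hm hg.le hmono) hlin)

end HomogeneousRecurrence

theorem stmt_5_general (lm mu gm xi : ℝ) (hl : 0 < lm) (hm : 0 < mu) (hg : 0 < gm)
    (n : ℕ) (a a' : ℕ → ℝ) (h0 : a 0 = 0) (h0' : a' 0 = 0)
    (hgt : a' 1 < a 1)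
    (hrec : ∀ i : ℕ,
      lm * ((i : ℝ) + 1 + n) * a (i + 2)
        = -xi + (lm + mu + gm) * ((i : ℝ) + 1 + n) * a (i + 1)
          - mu * ((i : ℝ) + 1 + n) * a i)
    (hrec' : ∀ i : ℕ,
      lm * ((i : ℝ) + 1 + n) * a' (i + 2)
        = -xi + (lm + mu + gm) * ((i : ℝ) + 1 + n) * a' (i + 1)
          - mu * ((i : ℝ) + 1 + n) * a' i) :
    (∀ i : ℕ, lm * (a (i + 2) - a' (i + 2))
        = (lm + mu + gm) * (a (i + 1) - a' (i + 1)) - mu * (a i - a' i)) ∧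
    Monotone (fun i => a i - a' i) ∧
    Tendsto (fun i => a i - a' i) atTop atTop := by
  have hw : ∀ i : ℕ, ((i : ℝ) + 1 + n) ≠ 0 := fun i => by positivity
  have hdiff := sub_solves_homogeneous _ (fun _ => -xi) a a' hw hrec hrec'
  have hd0 : a 0 - a' 0 = 0 := by rw [h0, h0', sub_self]
  have hd1 : 0 < a 1 - a' 1 := sub_pos.2 hgt
  have hmono : Monotone (fun i => a i - a' i) :=
    monotone_of_homogeneous hdiff hl hm.le hg.le hd0.ge (hd0.trans_le hd1.le)
  exact ⟨hdiff, hmono, tendsto_atTop_of_homogeneous hdiff hl hm.le hg hmono hd1⟩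

theorem stmt_5 (lm mu gm xi : ℝ) (hl : 0 < lm) (hm : 0 < mu) (hg : 0 < gm) (hxi : 0 ≤ xi)
    (n : ℕ) (hn : 1 ≤ n) (a a' : ℕ → ℝ) (h0 : a 0 = 0) (h0' : a' 0 = 0)
    (hgt : a' 1 < a 1)
    (hrec : ∀ i : ℕ,
      lm * ((i : ℝ) + 1 + n) * a (i + 2)
        = -xi + (lm + mu + gm) * ((i : ℝ) + 1 + n) * a (i + 1)
          - mu * ((i : ℝ) + 1 + n) * a i)
    (hrec' : ∀ i : ℕ,
      lm * ((i : ℝ) + 1 + n) * a' (i + 2)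
        = -xi + (lm + mu + gm) * ((i : ℝ) + 1 + n) * a' (i + 1)
          - mu * ((i : ℝ) + 1 + n) * a' i) :
    (∀ i : ℕ, lm * (a (i + 2) - a' (i + 2))
        = (lm + mu + gm) * (a (i + 1) - a' (i + 1)) - mu * (a i - a' i)) ∧
    Monotone (fun i => a i - a' i) ∧
    Tendsto (fun i => a i - a' i) atTop atTop :=
  stmt_5_general lm mu gm xi hl hm hg n a a' h0 h0' hgt hrec hrec'
end

section
/- Let λ, μ, γ > 0, ξ ≥ 0, 𝔫 ≥ 1. There is at most one real number a such that the solution of the recurrence a_0 = 0, a_1 = a, λ(i+𝔫)a_{i+1} = −ξ + (λ+μ+γ)(i+𝔫)a_i − μ(i+𝔫)a_{i-1} (i ≥ 1) is a bounded sequence. -/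
/-!
The difference `b` of two solutions solves the homogeneous recurrence
`λ b_{i+2} = (λ + μ + γ) b_{i+1} - μ b_i` with `b_0 = 0`, the common positive factor `i + 1 + 𝔫`
having cancelled together with `-ξ`. Rewritten as
`λ (b_{i+2} - b_{i+1}) = μ (b_{i+1} - b_i) + γ b_{i+1}`, it shows that if `b_1 > 0` then `b` is
increasing with increments at least `γ b_1 / λ`, hence unbounded; applied to `±b`, boundedness
forces `b_1 = 0`.
-/

def IsHomogeneousSolution (lm mu gm : ℝ) (b : ℕ → ℝ) : Prop :=
  ∀ i : ℕ, lm * b (i + 2) = (lm + mu + gm) * b (i + 1) - mu * b i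

namespace IsHomogeneousSolution

variable {lm mu gm : ℝ} {b : ℕ → ℝ}

theorem neg (hb : IsHomogeneousSolution lm mu gm b) : IsHomogeneousSolution lm mu gm (-b) := by
  intro i
  simp only [Pi.neg_apply]
  linarith [hb i]

theorem add_mul_le (hb : IsHomogeneousSolution lm mu gm b) (hl : 0 < lm) (hm : 0 ≤ mu)
    (hg : 0 < gm) (h0 : b 0 = 0) (h1 : 0 < b 1) (i : ℕ) :
    b 1 + i * (gm * b 1 / lm) ≤ b (i + 1) := by
  set d := gm * b 1 / lm
  have hd : 0 ≤ d := by positivity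
  suffices ∀ i : ℕ, b i ≤ b (i + 1) ∧ b 1 + i * d ≤ b (i + 1) from (this i).2
  intro i
  induction i with
  | zero => simp [h0, h1.le]
  | succ k ih =>
    obtain ⟨hmono, hgrowth⟩ := ih
    have hincr : d ≤ b (k + 2) - b (k + 1) := by
      have hc : b 1 ≤ b (k + 1) := (le_add_of_nonneg_right (by positivity)).trans hgrowth
      have hstep : lm * (b (k + 2) - b (k + 1)) = mu * (b (k + 1) - b k) + gm * b (k + 1) := by
        linarith [hb k]
      rw [div_le_iff₀ hl]
      nlinarith [mul_nonneg hm (sub_nonneg.2 hmono)]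
    push_cast
    constructor <;> linarith

theorem apply_one_nonpos_of_bddAbove (hb : IsHomogeneousSolution lm mu gm b) (hl : 0 < lm)
    (hm : 0 ≤ mu) (hg : 0 < gm) (h0 : b 0 = 0) (hbdd : BddAbove (Set.range b)) : b 1 ≤ 0 := by
  by_contra! h1
  obtain ⟨C, hC⟩ := hbdd
  have hd : 0 < gm * b 1 / lm := by positivity
  obtain ⟨i, hi⟩ := exists_nat_gt ((C - b 1) / (gm * b 1 / lm))
  rw [div_lt_iff₀ hd] at hi
  linarith [hb.add_mul_le hl hm hg h0 h1 i, hC (Set.mem_range_self (i + 1))]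

theorem apply_one_eq_zero_of_bounded (hb : IsHomogeneousSolution lm mu gm b) (hl : 0 < lm)
    (hm : 0 ≤ mu) (hg : 0 < gm) (h0 : b 0 = 0) (hbdd : ∃ C, ∀ i, |b i| ≤ C) : b 1 = 0 := by
  obtain ⟨C, hC⟩ := hbdd
  have hupper : b 1 ≤ 0 :=
    hb.apply_one_nonpos_of_bddAbove hl hm hg h0 ⟨C, by
      rintro _ ⟨i, rfl⟩; exact (abs_le.1 (hC i)).2⟩
  have hlower : -b 1 ≤ 0 :=
    hb.neg.apply_one_nonpos_of_bddAbove hl hm hg (by simp [h0]) ⟨C, by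
      rintro _ ⟨i, rfl⟩; exact neg_le.1 (abs_le.1 (hC i)).1⟩
  linarith

end IsHomogeneousSolution

theorem isHomogeneousSolution_sub {lm mu gm xi : ℝ} {w a a' : ℕ → ℝ} (hw : ∀ i, w i ≠ 0)
    (hrec : ∀ i : ℕ,
      lm * w i * a (i + 2) = -xi + (lm + mu + gm) * w i * a (i + 1) - mu * w i * a i)
    (hrec' : ∀ i : ℕ,
      lm * w i * a' (i + 2) = -xi + (lm + mu + gm) * w i * a' (i + 1) - mu * w i * a' i) :
    IsHomogeneousSolution lm mu gm (a - a') := by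
  intro i
  apply mul_left_cancel₀ (hw i)
  simp only [Pi.sub_apply]
  linear_combination hrec i - hrec' i

theorem stmt_6_general (lm mu gm xi : ℝ) (hl : 0 < lm) (hm : 0 < mu) (hg : 0 < gm)
    (n : ℕ) (a a' : ℕ → ℝ) (h0 : a 0 = 0) (h0' : a' 0 = 0)
    (hrec : ∀ i : ℕ,
      lm * ((i : ℝ) + 1 + n) * a (i + 2)
        = -xi + (lm + mu + gm) * ((i : ℝ) + 1 + n) * a (i + 1)
          - mu * ((i : ℝ) + 1 + n) * a i)
    (hrec' : ∀ i : ℕ,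
      lm * ((i : ℝ) + 1 + n) * a' (i + 2)
        = -xi + (lm + mu + gm) * ((i : ℝ) + 1 + n) * a' (i + 1)
          - mu * ((i : ℝ) + 1 + n) * a' i)
    (hbdd : ∃ C : ℝ, ∀ i : ℕ, |a i| ≤ C)
    (hbdd' : ∃ C : ℝ, ∀ i : ℕ, |a' i| ≤ C) :
    a 1 = a' 1 := by
  have hb : IsHomogeneousSolution lm mu gm (a - a') :=
    isHomogeneousSolution_sub (w := fun i : ℕ => (i : ℝ) + 1 + n) (fun i => by positivity)
      hrec hrec'
  obtain ⟨C, hC⟩ := hbdd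
  obtain ⟨C', hC'⟩ := hbdd'
  have hbdd_sub : ∃ D, ∀ i, |(a - a') i| ≤ D :=
    ⟨C + C', fun i => (abs_sub (a i) (a' i)).trans (add_le_add (hC i) (hC' i))⟩
  have h1 := hb.apply_one_eq_zero_of_bounded hl hm.le hg (by simp [h0, h0']) hbdd_sub
  simpa [sub_eq_zero] using h1

theorem stmt_6 (lm mu gm xi : ℝ) (hl : 0 < lm) (hm : 0 < mu) (hg : 0 < gm) (hxi : 0 ≤ xi)
    (n : ℕ) (hn : 1 ≤ n) (a a' : ℕ → ℝ) (h0 : a 0 = 0) (h0' : a' 0 = 0)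
    (hrec : ∀ i : ℕ,
      lm * ((i : ℝ) + 1 + n) * a (i + 2)
        = -xi + (lm + mu + gm) * ((i : ℝ) + 1 + n) * a (i + 1)
          - mu * ((i : ℝ) + 1 + n) * a i)
    (hrec' : ∀ i : ℕ,
      lm * ((i : ℝ) + 1 + n) * a' (i + 2)
        = -xi + (lm + mu + gm) * ((i : ℝ) + 1 + n) * a' (i + 1)
          - mu * ((i : ℝ) + 1 + n) * a' i)
    (hbdd : ∃ C : ℝ, ∀ i : ℕ, |a i| ≤ C)
    (hbdd' : ∃ C : ℝ, ∀ i : ℕ, |a' i| ≤ C) :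
    a 1 = a' 1 :=
  stmt_6_general lm mu gm xi hl hm hg n a a' h0 h0' hrec hrec' hbdd hbdd'
end

section
/- Let λ, μ, γ > 0, ξ > 0, 𝔫 ≥ 1, and let (a_i) solve a_0 = 0, λ(i+𝔫)a_{i+1} = −ξ + (λ+μ+γ)(i+𝔫)a_i − μ(i+𝔫)a_{i-1} for i ≥ 1. If there exists i_0 ≥ 1 with a_{i_0} < 0 and a_{i_0 − 1} ≥ 0, then a_i is strictly decreasing and negative for i ≥ i_0, and a_i → −∞ as i → ∞. -/
/-! With `c = i + 1 + 𝔫`, the recurrence reads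
`λ c (a_{i+2} - a_{i+1}) = -ξ + γ c a_{i+1} + μ c (a_{i+1} - a_i)`, so a step down
`a_{i+1} ≤ a_i` forces `a_{i+2} - a_{i+1} ≤ (γ / λ) a_{i+1}`. Starting from the step down to
`a_{i₀} < 0`, induction shows that every later term lies below `a_{i₀}` and every later decrement is
at most `(γ / λ) a_{i₀} < 0`; hence the sequence decreases at least linearly to `-∞`. -/

open Filter

lemma le_add_mul_of_forall_sub_le {a : ℕ → ℝ} {d : ℝ} {m : ℕ}
    (h : ∀ i, m ≤ i → a (i + 1) - a i ≤ d) (k : ℕ) : a (m + k) ≤ a m + k * d := by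
  induction k with
  | zero => simp
  | succ k ih =>
    have := h (m + k) (Nat.le_add_right m k)
    push_cast
    rw [← add_assoc]
    linarith

lemma tendsto_atBot_of_forall_sub_le_neg {a : ℕ → ℝ} {d : ℝ} {m : ℕ} (hd : d < 0)
    (h : ∀ i, m ≤ i → a (i + 1) - a i ≤ d) : Tendsto a atTop atBot := by
  rw [← tendsto_add_atTop_iff_nat m]
  have hlin : Tendsto (fun k : ℕ => a m + k * d) atTop atBot :=
    tendsto_atBot_add_const_left _ _
      (tendsto_natCast_atTop_atTop.atTop_mul_const_of_neg hd)
  refine tendsto_atBot_mono (fun k => ?_) hlin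
  rw [add_comm k m]
  exact le_add_mul_of_forall_sub_le h k

lemma forall_le_and_sub_le_of_step {a : ℕ → ℝ} {r : ℝ} {k : ℕ} (hr : 0 ≤ r)
    (hstep : ∀ j, a (j + 1) ≤ a j → a (j + 2) - a (j + 1) ≤ r * a (j + 1))
    (hdown : a (k + 1) ≤ a k) (hnonpos : a (k + 1) ≤ 0) :
    ∀ i, k + 1 ≤ i → a i ≤ a (k + 1) ∧ a (i + 1) - a i ≤ r * a (k + 1) := by
  have hd : r * a (k + 1) ≤ 0 := mul_nonpos_of_nonneg_of_nonpos hr hnonpos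
  intro i hi
  induction i, hi using Nat.le_induction with
  | base => exact ⟨le_rfl, hstep k hdown⟩
  | succ i _ ih =>
    obtain ⟨hle, hsub⟩ := ih
    have hle' : a (i + 1) ≤ a (k + 1) := by linarith
    refine ⟨hle', (hstep i (by linarith)).trans ?_⟩
    exact mul_le_mul_of_nonneg_left hle' hr

lemma sub_le_div_mul_of_recurrence {lm mu gm xi c x y z : ℝ} (hl : 0 < lm) (hm : 0 ≤ mu)
    (hxi : 0 ≤ xi) (hc : 0 < c)
    (hrec : lm * c * z = -xi + (lm + mu + gm) * c * y - mu * c * x) (hyx : y ≤ x) :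
    z - y ≤ gm / lm * y := by
  have hdiff : lm * c * (z - y) = -xi + gm * c * y + mu * c * (y - x) := by linear_combination hrec
  have hmc : mu * c * (y - x) ≤ 0 :=
    mul_nonpos_of_nonneg_of_nonpos (mul_nonneg hm hc.le) (sub_nonpos.2 hyx)
  have : lm * c * (z - y) ≤ lm * c * (gm / lm * y) := by
    rw [hdiff, show lm * c * (gm / lm * y) = gm * c * y by field_simp]
    linarith
  exact le_of_mul_le_mul_left this (mul_pos hl hc)

theorem stmt_7_general (lm mu gm xi : ℝ) (hl : 0 < lm) (hm : 0 < mu) (hg : 0 < gm) (hxi : 0 < xi)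
    (n : ℕ) (a : ℕ → ℝ)
    (hrec : ∀ i : ℕ,
      lm * ((i : ℝ) + 1 + n) * a (i + 2)
        = -xi + (lm + mu + gm) * ((i : ℝ) + 1 + n) * a (i + 1)
          - mu * ((i : ℝ) + 1 + n) * a i)
    (i0 : ℕ) (hneg : a i0 < 0) (hprev : 0 ≤ a (i0 - 1)) :
    (∀ i, i0 ≤ i → a (i + 1) < a i ∧ a i < 0) ∧ Tendsto a atTop atBot := by
  obtain _ | k := i0
  · exact absurd hprev (not_le.2 hneg)
  rw [Nat.add_sub_cancel] at hprev
  have hr : 0 < gm / lm := div_pos hg hl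
  have hstep (j : ℕ) (hj : a (j + 1) ≤ a j) : a (j + 2) - a (j + 1) ≤ gm / lm * a (j + 1) :=
    sub_le_div_mul_of_recurrence hl hm.le hxi.le (by positivity) (hrec j) hj
  have hd : gm / lm * a (k + 1) < 0 := mul_neg_of_pos_of_neg hr hneg
  have hdec := forall_le_and_sub_le_of_step hr.le hstep (hneg.le.trans hprev) hneg.le
  refine ⟨fun i hi => ?_, tendsto_atBot_of_forall_sub_le_neg hd fun i hi => (hdec i hi).2⟩
  obtain ⟨hle, hsub⟩ := hdec i hi
  exact ⟨by linarith, hle.trans_lt hneg⟩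

theorem stmt_7 (lm mu gm xi : ℝ) (hl : 0 < lm) (hm : 0 < mu) (hg : 0 < gm) (hxi : 0 < xi)
    (n : ℕ) (hn : 1 ≤ n) (a : ℕ → ℝ) (h0 : a 0 = 0)
    (hrec : ∀ i : ℕ,
      lm * ((i : ℝ) + 1 + n) * a (i + 2)
        = -xi + (lm + mu + gm) * ((i : ℝ) + 1 + n) * a (i + 1)
          - mu * ((i : ℝ) + 1 + n) * a i)
    (i0 : ℕ) (hi0 : 1 ≤ i0) (hneg : a i0 < 0) (hprev : 0 ≤ a (i0 - 1)) :
    (∀ i, i0 ≤ i → a (i + 1) < a i ∧ a i < 0) ∧ Tendsto a atTop atBot :=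
  stmt_7_general lm mu gm xi hl hm hg hxi n a hrec i0 hneg hprev
end

section
/- Let λ, μ, γ > 0, ξ ≥ 0, 𝔫 ≥ 1, q = λ+μ+γ, and let (a_i) solve a_0 = 0, a_1 = x, λ(i+𝔫)a_{i+1} = −ξ + q(i+𝔫)a_i − μ(i+𝔫)a_{i-1}. Then for any z within the radius of convergence of the power series 𝓔(z) = Σ_{i≥0} a_i z^i (assumed positive), one has (λ + μz² − qz)·𝓔(z) = zλx − zξ·Σ_{k≥1} z^k/(k+𝔫). -/
/-! Multiplying the recurrence by `z ^ (i + 2)` and summing over `i` expresses the shifted series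
`∑ aᵢ₊₁ zⁱ⁺¹` and `∑ aᵢ₊₂ zⁱ⁺²` through `𝓔(z)` and its first two coefficients, while the
non-homogeneity `-ξ / (i + 1 + 𝔫)` contributes `-ξ z ∑ zᵏ⁺¹ / (k + 1 + 𝔫)`. -/

section GeneratingFunction

variable {K : Type*} [Field K] [TopologicalSpace K] [IsTopologicalRing K] [T2Space K]

theorem tsum_mul_pow_eq_two_add {a : ℕ → K} {z : K} (ha : Summable fun i => a i * z ^ i) :
    ∑' i, a i * z ^ i = a 0 + a 1 * z + ∑' i, a (i + 2) * z ^ (i + 2) := by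
  have ha₁ : Summable fun i => a (i + 1) * z ^ (i + 1) :=
    (summable_nat_add_iff (f := fun i => a i * z ^ i) 1).mpr ha
  rw [ha.tsum_eq_zero_add, ha₁.tsum_eq_zero_add]
  simp [add_assoc]

theorem mul_tsum_of_recurrence {a f : ℕ → K} {c₀ c₁ c₂ z : K}
    (hrec : ∀ i, c₂ * a (i + 2) = c₁ * a (i + 1) - c₀ * a i + f i)
    (ha : Summable fun i => a i * z ^ i) (hf : Summable fun i => f i * z ^ (i + 2)) :
    (c₂ - c₁ * z + c₀ * z ^ 2) * ∑' i, a i * z ^ i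
      = c₂ * a 0 + (c₂ * a 1 - c₁ * a 0) * z + ∑' i, f i * z ^ (i + 2) := by
  have ha₁ : Summable fun i => a (i + 1) * z ^ (i + 1) :=
    (summable_nat_add_iff (f := fun i => a i * z ^ i) 1).mpr ha
  have hshift : ∑' i, a i * z ^ i = a 0 + ∑' i, a (i + 1) * z ^ (i + 1) := by
    rw [ha.tsum_eq_zero_add]; simp
  have hsum : c₂ * ∑' i, a (i + 2) * z ^ (i + 2)
      = c₁ * z * ∑' i, a (i + 1) * z ^ (i + 1) - c₀ * z ^ 2 * ∑' i, a i * z ^ i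
        + ∑' i, f i * z ^ (i + 2) := by
    have hterm : ∀ i, c₂ * (a (i + 2) * z ^ (i + 2))
        = c₁ * z * (a (i + 1) * z ^ (i + 1)) - c₀ * z ^ 2 * (a i * z ^ i)
          + f i * z ^ (i + 2) := fun i => by
      linear_combination z ^ (i + 2) * hrec i
    rw [← tsum_mul_left, tsum_congr hterm,
      ((ha₁.mul_left _).sub (ha.mul_left _)).tsum_add hf,
      (ha₁.mul_left _).tsum_sub (ha.mul_left _), tsum_mul_left, tsum_mul_left]
  linear_combination hsum + c₂ * tsum_mul_pow_eq_two_add ha - c₁ * z * hshift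

end GeneratingFunction

theorem stmt_8_general (lm mu gm xi x : ℝ)
    (n : ℕ) (a : ℕ → ℝ) (h0 : a 0 = 0) (h1 : a 1 = x)
    (hrec : ∀ i : ℕ,
      lm * ((i : ℝ) + 1 + n) * a (i + 2)
        = -xi + (lm + mu + gm) * ((i : ℝ) + 1 + n) * a (i + 1)
          - mu * ((i : ℝ) + 1 + n) * a i)
    (R : ℝ)
    (hconv : ∀ w : ℝ, |w| < R → Summable (fun i : ℕ => a i * w ^ i))
    (z : ℝ) (hz : |z| < R)
    (hlog : Summable (fun k : ℕ => z ^ (k + 1) / ((k : ℝ) + 1 + n))) :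
    (lm + mu * z ^ 2 - (lm + mu + gm) * z) * (∑' i : ℕ, a i * z ^ i)
      = z * lm * x - z * xi * ∑' k : ℕ, z ^ (k + 1) / ((k : ℝ) + 1 + n) := by
  have hforce : ∀ i : ℕ, -xi / ((i : ℝ) + 1 + n) * z ^ (i + 2)
      = -(xi * z) * (z ^ (i + 1) / ((i : ℝ) + 1 + n)) := fun i => by ring
  have hrec_div : ∀ i : ℕ, lm * a (i + 2)
      = (lm + mu + gm) * a (i + 1) - mu * a i + -xi / ((i : ℝ) + 1 + n) := fun i => by
    have hpos : (0 : ℝ) < (i : ℝ) + 1 + n := by positivity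
    field_simp
    linear_combination hrec i
  have key := mul_tsum_of_recurrence hrec_div (hconv z hz)
    (by simpa only [hforce] using hlog.mul_left (-(xi * z)))
  rw [tsum_congr hforce, tsum_mul_left, h0, h1] at key
  linear_combination key

theorem stmt_8 (lm mu gm xi x : ℝ) (hl : 0 < lm) (hm : 0 < mu) (hg : 0 < gm) (hxi : 0 ≤ xi)
    (n : ℕ) (hn : 1 ≤ n) (a : ℕ → ℝ) (h0 : a 0 = 0) (h1 : a 1 = x)
    (hrec : ∀ i : ℕ,
      lm * ((i : ℝ) + 1 + n) * a (i + 2)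
        = -xi + (lm + mu + gm) * ((i : ℝ) + 1 + n) * a (i + 1)
          - mu * ((i : ℝ) + 1 + n) * a i)
    (R : ℝ) (hR : 0 < R)
    (hconv : ∀ w : ℝ, |w| < R → Summable (fun i : ℕ => a i * w ^ i))
    (z : ℝ) (hz : |z| < R)
    (hlog : Summable (fun k : ℕ => z ^ (k + 1) / ((k : ℝ) + 1 + n))) :
    (lm + mu * z ^ 2 - (lm + mu + gm) * z) * (∑' i : ℕ, a i * z ^ i)
      = z * lm * x - z * xi * ∑' k : ℕ, z ^ (k + 1) / ((k : ℝ) + 1 + n) :=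
  stmt_8_general lm mu gm xi x n a h0 h1 hrec R hconv z hz hlog
end

section
/- Let λ, μ, γ > 0, ξ ≥ 0, 𝔫 ≥ 1, q = λ+μ+γ, and let 𝑎̲ < ā be the real roots of μX² − qX + λ, and c = (q² − 4λμ)^{−1/2}. Any solution (a_i) of a_0 = 0, a_1 = x > 0, λ(i+𝔫)a_{i+1} = −ξ + q(i+𝔫)a_i − μ(i+𝔫)a_{i-1} satisfies, for all i ≥ 1, a_i = λxc·(𝑎̲^{−i} − ā^{−i}) − Σ_{k=1}^{i−1} (cξ/(k+𝔫))·(𝑎̲^{−(i−k)} − ā^{−(i−k)}). -/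
/-!
Both roots are nonzero, and `m ↦ (r ^ m)⁻¹` solves the homogeneous recurrence
`λ u_{m+2} = q u_{m+1} - μ u_m` for each root `r` of `μ X² - q X + λ`; hence so does
`G m = 𝑎̲⁻ᵐ - ā⁻ᵐ`, with `G 0 = 0` and `λ c G 1 = 1` (the discriminant is `μ² (ā - 𝑎̲)²`, so
`c = (μ (ā - 𝑎̲))⁻¹`, while `λ (𝑎̲⁻¹ - ā⁻¹) = μ (ā - 𝑎̲)`). By Duhamel's principle the convolution
`∑_{1 ≤ k < i} w_k G (i - k)` of any weights with `G` satisfies the same recurrence up to the forcing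
term `λ w_{i+1} G 1`; with `w_k = c ξ / (k + 𝔫)` this forcing is `ξ / (i + 1 + 𝔫)`, so the
claimed formula solves the recurrence with the same two initial values as `a`.
-/

open Finset

section QuadraticRoots

variable {K : Type*} [Field K] {a b c r s : K}

theorem ne_zero_of_quadratic_root (hc : c ≠ 0) (hr : a * r ^ 2 - b * r + c = 0) : r ≠ 0 := by
  rintro rfl
  exact hc (by simpa using hr)

theorem quadratic_roots_sum (hr : a * r ^ 2 - b * r + c = 0) (hs : a * s ^ 2 - b * s + c = 0)
    (hrs : r ≠ s) : a * (r + s) = b := by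
  have h : (a * (r + s) - b) * (r - s) = 0 := by linear_combination hr - hs
  simpa [sub_eq_zero, hrs] using h

theorem inv_pow_recurrence (hc : c ≠ 0) (hr : a * r ^ 2 - b * r + c = 0) (m : ℕ) :
    c * (r ^ (m + 2))⁻¹ = b * (r ^ (m + 1))⁻¹ - a * (r ^ m)⁻¹ := by
  have ht : r * r⁻¹ = 1 := mul_inv_cancel₀ (ne_zero_of_quadratic_root hc hr)
  simp only [← inv_pow, pow_succ]
  linear_combination r⁻¹ ^ m * (r⁻¹ ^ 2 * hr - (a * (1 + r * r⁻¹) - b * r⁻¹) * ht)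

theorem mul_inv_sub_inv_of_quadratic_roots (hc : c ≠ 0) (hr : a * r ^ 2 - b * r + c = 0)
    (hs : a * s ^ 2 - b * s + c = 0) : c * (r⁻¹ - s⁻¹) = a * (s - r) := by
  have hr0 := ne_zero_of_quadratic_root hc hr
  have hs0 := ne_zero_of_quadratic_root hc hs
  field_simp
  linear_combination s * hr - r * hs

end QuadraticRoots

theorem sqrt_discrim_eq_of_quadratic_roots {a b c r s : ℝ} (ha : 0 < a)
    (hr : a * r ^ 2 - b * r + c = 0) (hs : a * s ^ 2 - b * s + c = 0) (hrs : r < s) :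
    √(b ^ 2 - 4 * c * a) = a * (s - r) := by
  have hsum := quadratic_roots_sum hr hs hrs.ne
  have hdisc : b ^ 2 - 4 * c * a = (a * (s - r)) ^ 2 := by
    linear_combination (-4 * a) * hr - (b - 2 * a * r + a * (s - r)) * hsum
  rw [hdisc, Real.sqrt_sq (mul_nonneg ha.le (sub_nonneg.mpr hrs.le))]

section Duhamel

variable {R : Type*} [CommRing R] {p q r : R} {G : ℕ → R}

def duhamelSum (w G : ℕ → R) (i : ℕ) : R := ∑ k ∈ Ico 1 i, w k * G (i - k)

theorem duhamelSum_recurrence (w : ℕ → R) (hG0 : G 0 = 0)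
    (hG : ∀ m, p * G (m + 2) = q * G (m + 1) - r * G m) (i : ℕ) :
    p * duhamelSum w G (i + 2)
      = q * duhamelSum w G (i + 1) - r * duhamelSum w G i + p * w (i + 1) * G 1 := by
  have hext : duhamelSum w G i = ∑ k ∈ Ico 1 (i + 1), w k * G (i - k) := by
    refine sum_subset (Ico_subset_Ico_right i.le_succ) fun k hk hki => ?_
    obtain rfl : k = i := by simp only [mem_Ico] at hk hki; omega
    simp [hG0]
  have hterm : ∀ k ∈ Ico 1 (i + 1),
      p * (w k * G (i + 2 - k)) = q * (w k * G (i + 1 - k)) - r * (w k * G (i - k)) := by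
    intro k hk
    have hki : k ≤ i := by simp only [mem_Ico] at hk; omega
    rw [show i + 2 - k = i - k + 2 by omega, show i + 1 - k = i - k + 1 by omega]
    linear_combination w k * hG (i - k)
  rw [hext, duhamelSum, duhamelSum, sum_Ico_succ_top (by omega : 1 ≤ i + 1),
    show i + 2 - (i + 1) = 1 by omega, mul_add, mul_sum, sum_congr rfl hterm,
    sum_sub_distrib, ← mul_sum, ← mul_sum]
  ring

end Duhamel

theorem stmt_10_general (lm mu gm xi x : ℝ) (hl : 0 < lm) (hm : 0 < mu) (n : ℕ)
    (ra rb : ℝ) (hlt : ra < rb)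
    (hra : mu * ra ^ 2 - (lm + mu + gm) * ra + lm = 0)
    (hrb : mu * rb ^ 2 - (lm + mu + gm) * rb + lm = 0)
    (c : ℝ) (hc : c = (Real.sqrt ((lm + mu + gm) ^ 2 - 4 * lm * mu))⁻¹)
    (a : ℕ → ℝ) (h0 : a 0 = 0) (h1 : a 1 = x)
    (hrec : ∀ i : ℕ,
      lm * ((i : ℝ) + 1 + n) * a (i + 2)
        = -xi + (lm + mu + gm) * ((i : ℝ) + 1 + n) * a (i + 1)
          - mu * ((i : ℝ) + 1 + n) * a i) :
    ∀ i : ℕ, 1 ≤ i →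
      a i = lm * x * c * ((ra ^ i)⁻¹ - (rb ^ i)⁻¹)
        - ∑ k ∈ Finset.Ico 1 i,
            (c * xi / ((k : ℝ) + n)) * ((ra ^ (i - k))⁻¹ - (rb ^ (i - k))⁻¹) := by
  set G : ℕ → ℝ := fun m => (ra ^ m)⁻¹ - (rb ^ m)⁻¹ with hGdef
  set w : ℕ → ℝ := fun k => c * xi / ((k : ℝ) + n) with hwdef
  have hG : ∀ m, lm * G (m + 2) = (lm + mu + gm) * G (m + 1) - mu * G m := fun m => by
    linear_combination inv_pow_recurrence hl.ne' hra m - inv_pow_recurrence hl.ne' hrb m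
  have hcG1 : lm * c * G 1 = 1 := by
    have hmu := mul_inv_sub_inv_of_quadratic_roots hl.ne' hra hrb
    rw [hc, sqrt_discrim_eq_of_quadratic_roots hm hra hrb hlt]
    simp only [hGdef, pow_one]
    rw [mul_right_comm, hmu, mul_inv_cancel₀ (mul_pos hm (sub_pos.mpr hlt)).ne']
  have key : ∀ i, a i = lm * x * c * G i - duhamelSum w G i := by
    refine Nat.twoStepInduction ?_ ?_ fun i ih0 ih1 => ?_
    · simp [h0, hGdef, duhamelSum]
    · simp only [h1, duhamelSum, Ico_self, sum_empty, sub_zero]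
      linear_combination -x * hcG1
    · have hS := duhamelSum_recurrence w (by simp [hGdef]) hG i
      have hN : (0 : ℝ) < (i : ℝ) + 1 + n := by positivity
      have hforce : ((i : ℝ) + 1 + n) * (lm * w (i + 1) * G 1) = xi := by
        simp only [hwdef]
        push_cast
        field_simp
        linear_combination xi * hcG1
      apply mul_left_cancel₀ (mul_pos hl hN).ne'
      rw [hrec i, ih0, ih1]
      linear_combination (-((i : ℝ) + 1 + n) * lm * x * c) * hG i + ((i : ℝ) + 1 + n) * hS
        + hforce
  exact fun i _ => key i

theorem stmt_10 (lm mu gm xi x : ℝ) (hl : 0 < lm) (hm : 0 < mu) (hg : 0 < gm)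
    (hxi : 0 ≤ xi) (hx : 0 < x) (n : ℕ) (hn : 1 ≤ n)
    (ra rb : ℝ) (hlt : ra < rb)
    (hra : mu * ra ^ 2 - (lm + mu + gm) * ra + lm = 0)
    (hrb : mu * rb ^ 2 - (lm + mu + gm) * rb + lm = 0)
    (c : ℝ) (hc : c = (Real.sqrt ((lm + mu + gm) ^ 2 - 4 * lm * mu))⁻¹)
    (a : ℕ → ℝ) (h0 : a 0 = 0) (h1 : a 1 = x)
    (hrec : ∀ i : ℕ,
      lm * ((i : ℝ) + 1 + n) * a (i + 2)
        = -xi + (lm + mu + gm) * ((i : ℝ) + 1 + n) * a (i + 1)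
          - mu * ((i : ℝ) + 1 + n) * a i) :
    ∀ i : ℕ, 1 ≤ i →
      a i = lm * x * c * ((ra ^ i)⁻¹ - (rb ^ i)⁻¹)
        - ∑ k ∈ Finset.Ico 1 i,
            (c * xi / ((k : ℝ) + n)) * ((ra ^ (i - k))⁻¹ - (rb ^ (i - k))⁻¹) :=
  stmt_10_general lm mu gm xi x hl hm n ra rb hlt hra hrb c hc a h0 h1 hrec
end

section
/- Let λ, μ, γ > 0, ξ > 0, 𝔫 ≥ 1, and 𝑎̲ ∈ (0,1) the smaller root of μX² − (λ+μ+γ)X + λ. Define â = (ξ/λ)·(Σ_{k=0}^∞ 𝑎̲^k/(𝔫+k) − 1/𝔫). If a_1 < â, then the solution (a_i) to a_0 = 0, λ(i+𝔫)a_{i+1} = −ξ + (λ+μ+γ)(i+𝔫)a_i − μ(i+𝔫)a_{i-1} is not everywhere nonnegative: there exists i_0 with a_{i_0} < 0. -/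
/-!
The characteristic roots of the recurrence are `1/𝑎̲` and `ρ = μ 𝑎̲ / λ`, so `v i = a (i+1) - ρ a i`
satisfies the first-order recurrence `𝑎̲ v (i+1) = v i - (ξ/λ) 𝑎̲ / (i+1+𝔫)`, which solves to
`𝑎̲ ^ i v i = a 1 - (ξ/λ) (∑_{k ≤ i} 𝑎̲ ^ k / (𝔫 + k) - 1/𝔫) → a 1 - â < 0`. Hence some `v m` is
negative, and from then on `v` only decreases. As `ρ < 1`, a nonnegative `a` would then satisfy
`a (i+1) ≤ a i + v m` for `i ≥ m`, and so decrease linearly to `-∞`.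
-/

open Filter Finset Topology

theorem mul_lt_of_quadratic_root {lm mu gm r : ℝ} (hg : 0 < gm) (hr0 : 0 < r) (hr1 : r < 1)
    (hr : mu * r ^ 2 - (lm + mu + gm) * r + lm = 0) : mu * r < lm := by
  by_contra! h
  -- `(λ - μ r) (1 - r) = γ r`
  nlinarith [mul_nonneg (sub_nonneg.2 h) (sub_pos.2 hr1).le, mul_pos hg hr0]

theorem hasSum_pow_succ_div_add {r x : ℝ} (hr0 : 0 ≤ r) (hr1 : r < 1) (hx : 0 < x) :
    HasSum (fun k : ℕ => r ^ (k + 1) / (x + (k + 1 : ℕ))) (∑' k : ℕ, r ^ k / (x + k) - 1 / x) := by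
  have hsum : Summable (fun k : ℕ => r ^ k / (x + k)) := by
    refine Summable.of_nonneg_of_le (fun k => by positivity) (fun k => ?_)
      ((summable_geometric_of_lt_one hr0 hr1).div_const x)
    exact div_le_div_of_nonneg_left (by positivity) hx (by simp)
  rw [hsum.tsum_eq_zero_add]
  simpa using ((summable_nat_add_iff 1).2 hsum).hasSum

section FirstOrder

variable {r : ℝ} {v g : ℕ → ℝ}

theorem pow_mul_eq_sub_sum (h : ∀ i, r * v (i + 1) = v i - g i) (i : ℕ) :
    r ^ i * v i = v 0 - ∑ k ∈ range i, r ^ k * g k := by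
  induction i with
  | zero => simp
  | succ i ih => rw [sum_range_succ, pow_succ, mul_assoc, h i]; linear_combination ih

theorem tendsto_pow_mul_of_hasSum (h : ∀ i, r * v (i + 1) = v i - g i) {S : ℝ}
    (hS : HasSum (fun k => r ^ k * g k) S) :
    Tendsto (fun i => r ^ i * v i) atTop (𝓝 (v 0 - S)) := by
  simpa only [pow_mul_eq_sub_sum h] using hS.tendsto_sum_nat.const_sub (v 0)

theorem le_of_mul_succ_le (hr0 : 0 < r) (hr1 : r ≤ 1) (h : ∀ i, r * v (i + 1) ≤ v i) {m : ℕ}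
    (hm : v m ≤ 0) : ∀ i ≥ m, v i ≤ v m := by
  intro i hi
  induction i, hi using Nat.le_induction with
  | base => rfl
  | succ i _ ih =>
    have hvi : v i ≤ r * v i := by nlinarith
    have : v (i + 1) ≤ v i := le_of_mul_le_mul_left ((h i).trans hvi) hr0
    linarith

end FirstOrder

theorem exists_neg_of_succ_le_add {x : ℕ → ℝ} {d : ℝ} (hd : d < 0) {m : ℕ}
    (h : ∀ i ≥ m, x (i + 1) ≤ x i + d) : ∃ i, x i < 0 := by
  have hlin : ∀ k : ℕ, x (m + k) ≤ x m + k * d := by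
    intro k
    induction k with
    | zero => simp
    | succ k ih =>
      have := h (m + k) (by omega)
      rw [← add_assoc]
      push_cast
      linarith
  obtain ⟨k, hk⟩ := exists_nat_gt (x m / -d)
  refine ⟨m + k, (hlin k).trans_lt ?_⟩
  rw [div_lt_iff₀ (neg_pos.2 hd)] at hk
  linarith

theorem mul_succ_eq_sub_of_recurrence {lm mu s xi r : ℝ} {w x : ℕ → ℝ} (hl : lm ≠ 0)
    (hw : ∀ i, w i ≠ 0) (hr : mu * r ^ 2 - s * r + lm = 0)
    (hrec : ∀ i, lm * w i * x (i + 2) = -xi + s * w i * x (i + 1) - mu * w i * x i) (i : ℕ) :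
    r * (x (i + 2) - mu * r / lm * x (i + 1))
      = (x (i + 1) - mu * r / lm * x i) - xi / lm * r / w i := by
  have hwi := hw i
  field_simp
  linear_combination r * hrec i - w i * x (i + 1) * hr

theorem stmt_11_general (lm mu gm xi : ℝ) (hl : 0 < lm) (hg : 0 < gm) (hxi : 0 < xi)
    (n : ℕ) (hn : 1 ≤ n)
    (ra : ℝ) (hra01 : ra ∈ Set.Ioo (0 : ℝ) 1)
    (hra : mu * ra ^ 2 - (lm + mu + gm) * ra + lm = 0)
    (a : ℕ → ℝ) (h0 : a 0 = 0)
    (hrec : ∀ i : ℕ,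
      lm * ((i : ℝ) + 1 + n) * a (i + 2)
        = -xi + (lm + mu + gm) * ((i : ℝ) + 1 + n) * a (i + 1)
          - mu * ((i : ℝ) + 1 + n) * a i)
    (hlt : a 1 < (xi / lm) * ((∑' k : ℕ, ra ^ k / ((n : ℝ) + k)) - 1 / n)) :
    ∃ i0 : ℕ, a i0 < 0 := by
  obtain ⟨hr0, hr1⟩ := hra01
  by_contra! hnonneg
  set ρ := mu * ra / lm
  set v : ℕ → ℝ := fun i => a (i + 1) - ρ * a i
  have hv : ∀ i, ra * v (i + 1) = v i - xi / lm * ra / ((i : ℝ) + 1 + n) :=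
    mul_succ_eq_sub_of_recurrence hl.ne' (fun i => by positivity) hra hrec
  have hS : HasSum (fun k : ℕ => ra ^ k * (xi / lm * ra / ((k : ℝ) + 1 + n)))
      (xi / lm * (∑' k : ℕ, ra ^ k / ((n : ℝ) + k) - 1 / n)) := by
    refine ((hasSum_pow_succ_div_add hr0.le hr1 (by positivity : (0 : ℝ) < n)).mul_left
      (xi / lm)).congr_fun fun k => ?_
    push_cast
    ring
  have hlim := tendsto_pow_mul_of_hasSum hv hS
  have hlim_neg : v 0 - xi / lm * (∑' k : ℕ, ra ^ k / ((n : ℝ) + k) - 1 / n) < 0 := by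
    simpa [v, h0] using hlt
  obtain ⟨m, hm⟩ := (hlim.eventually (gt_mem_nhds hlim_neg)).exists
  have hvm : v m < 0 := neg_of_mul_neg_right hm (by positivity)
  have hv_step (i : ℕ) : ra * v (i + 1) ≤ v i := by
    rw [hv i]
    exact sub_le_self _ (by positivity)
  have hv_le : ∀ i ≥ m, v i ≤ v m := le_of_mul_succ_le hr0 hr1.le hv_step hvm.le
  have hρ : ρ ≤ 1 := (div_le_one hl).2 (mul_lt_of_quadratic_root hg hr0 hr1 hra).le
  obtain ⟨i, hi⟩ := exists_neg_of_succ_le_add hvm (x := a) fun i hi => by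
    have : a (i + 1) = ρ * a i + v i := by simp only [v]; ring
    nlinarith [hv_le i hi, hnonneg i]
  exact (hnonneg i).not_gt hi

theorem stmt_11 (lm mu gm xi : ℝ) (hl : 0 < lm) (hm : 0 < mu) (hg : 0 < gm) (hxi : 0 < xi)
    (n : ℕ) (hn : 1 ≤ n)
    (ra : ℝ) (hra01 : ra ∈ Set.Ioo (0 : ℝ) 1)
    (hra : mu * ra ^ 2 - (lm + mu + gm) * ra + lm = 0)
    (hra_small : ∀ z : ℝ, mu * z ^ 2 - (lm + mu + gm) * z + lm = 0 → ra ≤ z)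
    (a : ℕ → ℝ) (h0 : a 0 = 0)
    (hrec : ∀ i : ℕ,
      lm * ((i : ℝ) + 1 + n) * a (i + 2)
        = -xi + (lm + mu + gm) * ((i : ℝ) + 1 + n) * a (i + 1)
          - mu * ((i : ℝ) + 1 + n) * a i)
    (hlt : a 1 < (xi / lm) * ((∑' k : ℕ, ra ^ k / ((n : ℝ) + k)) - 1 / n)) :
    ∃ i0 : ℕ, a i0 < 0 :=
  stmt_11_general lm mu gm xi hl hg hxi n hn ra hra01 hra a h0 hrec hlt
end

section
/- Let 0 < r < 1 and 𝔫 ≥ 1. Then for all i ≥ 1, (1/(i+𝔫))·r^i ≤ Σ_{k=i}^∞ r^k/(k+𝔫) ≤ r^i/(i+𝔫) + r^i/((i+𝔫)·(−log r)). In particular, r^{−i}·Σ_{k=i}^∞ r^k/(k+𝔫) = O(1/i) as i → ∞, and the sequence i ↦ r^{−i}·Σ_{k=i}^∞ r^k/(k+𝔫) tends to 0. -/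
/-!
Pulling out `r ^ i`, the tail is `r ^ i` times `∑ r ^ k / (c + k)` with `c = i + 𝔫`. Termwise
this sum lies between its first term `1 / c` and the geometric bound `1 / (c (1 - r))`, and
`r (-log r) ≤ 1 - r` turns `1 / (1 - r)` into `1 + 1 / (-log r)`. The geometric bound is at most
`(1 - r)⁻¹ / i`, which gives the `O(1 / i)` estimate and the limit.
-/

open Filter

theorem inv_one_sub_le_one_add_inv_neg_log {r : ℝ} (hr0 : 0 < r) (hr1 : r < 1) :
    (1 - r)⁻¹ ≤ 1 + (-Real.log r)⁻¹ := by
  have hL : 0 < -Real.log r := neg_pos.mpr (Real.log_neg hr0 hr1)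
  have hrL : r * -Real.log r ≤ 1 - r := by
    have := mul_le_mul_of_nonneg_left (Real.one_sub_inv_le_log_of_pos hr0) hr0.le
    rw [mul_sub, mul_inv_cancel₀ hr0.ne'] at this
    linarith
  have : r ≤ (1 - r) / -Real.log r := (le_div_iff₀ hL).mpr hrL
  rw [inv_le_iff_one_le_mul₀ (by linarith), add_mul, one_mul, inv_mul_eq_div]
  linarith

section GeometricOverLinear

variable {r c : ℝ}

theorem summable_pow_div_add_natCast (hr0 : 0 ≤ r) (hr1 : r < 1) (hc : 0 < c) :
    Summable fun k : ℕ => r ^ k / (c + k) :=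
  ((summable_geometric_of_lt_one hr0 hr1).div_const c).of_nonneg_of_le
    (fun k => by positivity)
    (fun k => div_le_div_of_nonneg_left (by positivity) hc (by simp))

theorem inv_le_tsum_pow_div_add_natCast (hr0 : 0 ≤ r) (hr1 : r < 1) (hc : 0 < c) :
    c⁻¹ ≤ ∑' k : ℕ, r ^ k / (c + k) := by
  simpa using (summable_pow_div_add_natCast hr0 hr1 hc).le_tsum 0 (fun k _ => by positivity)

theorem tsum_pow_div_add_natCast_le (hr0 : 0 ≤ r) (hr1 : r < 1) (hc : 0 < c) :
    ∑' k : ℕ, r ^ k / (c + k) ≤ c⁻¹ * (1 - r)⁻¹ := by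
  calc ∑' k : ℕ, r ^ k / (c + k)
      ≤ ∑' k : ℕ, r ^ k / c :=
        (summable_pow_div_add_natCast hr0 hr1 hc).tsum_le_tsum
          (fun k => div_le_div_of_nonneg_left (by positivity) hc (by simp))
          ((summable_geometric_of_lt_one hr0 hr1).div_const c)
    _ = c⁻¹ * (1 - r)⁻¹ := by
        rw [tsum_div_const, tsum_geometric_of_lt_one hr0 hr1, div_eq_inv_mul]

theorem tsum_pow_div_add_natCast_le_add (hr0 : 0 < r) (hr1 : r < 1) (hc : 0 < c) :
    ∑' k : ℕ, r ^ k / (c + k) ≤ c⁻¹ + (c * -Real.log r)⁻¹ :=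
  calc ∑' k : ℕ, r ^ k / (c + k) ≤ c⁻¹ * (1 - r)⁻¹ := tsum_pow_div_add_natCast_le hr0.le hr1 hc
    _ ≤ c⁻¹ * (1 + (-Real.log r)⁻¹) :=
        mul_le_mul_of_nonneg_left (inv_one_sub_le_one_add_inv_neg_log hr0 hr1) (by positivity)
    _ = c⁻¹ + (c * -Real.log r)⁻¹ := by rw [mul_add, mul_one, mul_inv]

end GeometricOverLinear

theorem tsum_pow_add_div_eq_pow_mul (r : ℝ) (i n : ℕ) :
    ∑' k : ℕ, r ^ (i + k) / ((i : ℝ) + k + n) = r ^ i * ∑' k : ℕ, r ^ k / ((i + n : ℝ) + k) := by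
  rw [← tsum_mul_left]
  congr 1 with k
  rw [pow_add, add_right_comm, mul_div_assoc]

theorem stmt_14_general (r : ℝ) (hr0 : 0 < r) (hr1 : r < 1) (n : ℕ) :
    (∀ i : ℕ, 1 ≤ i →
      r ^ i / ((i : ℝ) + n) ≤ ∑' k : ℕ, r ^ (i + k) / ((i : ℝ) + k + n) ∧
      (∑' k : ℕ, r ^ (i + k) / ((i : ℝ) + k + n))
        ≤ r ^ i / ((i : ℝ) + n) + r ^ i / (((i : ℝ) + n) * (-Real.log r))) ∧
    (∃ C : ℝ, ∀ i : ℕ, 1 ≤ i →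
      (r ^ i)⁻¹ * ∑' k : ℕ, r ^ (i + k) / ((i : ℝ) + k + n) ≤ C / i) ∧
    Tendsto (fun i : ℕ => (r ^ i)⁻¹ * ∑' k : ℕ, r ^ (i + k) / ((i : ℝ) + k + n))
      atTop (nhds 0) := by
  have hc (i : ℕ) (hi : 1 ≤ i) : 0 < (i + n : ℝ) := by positivity
  have hscaled (i : ℕ) : (r ^ i)⁻¹ * ∑' k : ℕ, r ^ (i + k) / ((i : ℝ) + k + n)
      = ∑' k : ℕ, r ^ k / ((i + n : ℝ) + k) := by
    rw [tsum_pow_add_div_eq_pow_mul, inv_mul_cancel_left₀ (pow_ne_zero i hr0.ne')]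
  have hbound (i : ℕ) (hi : 1 ≤ i) :
      (r ^ i)⁻¹ * ∑' k : ℕ, r ^ (i + k) / ((i : ℝ) + k + n) ≤ (1 - r)⁻¹ / i := by
    rw [hscaled, div_eq_inv_mul]
    refine (tsum_pow_div_add_natCast_le hr0.le hr1 (hc i hi)).trans ?_
    gcongr
    linarith
  refine ⟨fun i hi => ?_, ⟨_, hbound⟩, ?_⟩
  · rw [tsum_pow_add_div_eq_pow_mul]
    simp only [div_eq_mul_inv (r ^ i), ← mul_add]
    exact ⟨by gcongr; exact inv_le_tsum_pow_div_add_natCast hr0.le hr1 (hc i hi),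
      by gcongr; exact tsum_pow_div_add_natCast_le_add hr0 hr1 (hc i hi)⟩
  · refine squeeze_zero' (Eventually.of_forall fun i => ?_)
      ((eventually_ge_atTop 1).mono hbound) (tendsto_const_div_atTop_nhds_zero_nat _)
    rw [hscaled]
    exact tsum_nonneg fun k => by positivity

theorem stmt_14 (r : ℝ) (hr0 : 0 < r) (hr1 : r < 1) (n : ℕ) (hn : 1 ≤ n) :
    (∀ i : ℕ, 1 ≤ i →
      r ^ i / ((i : ℝ) + n) ≤ ∑' k : ℕ, r ^ (i + k) / ((i : ℝ) + k + n) ∧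
      (∑' k : ℕ, r ^ (i + k) / ((i : ℝ) + k + n))
        ≤ r ^ i / ((i : ℝ) + n) + r ^ i / (((i : ℝ) + n) * (-Real.log r))) ∧
    (∃ C : ℝ, ∀ i : ℕ, 1 ≤ i →
      (r ^ i)⁻¹ * ∑' k : ℕ, r ^ (i + k) / ((i : ℝ) + k + n) ≤ C / i) ∧
    Tendsto (fun i : ℕ => (r ^ i)⁻¹ * ∑' k : ℕ, r ^ (i + k) / ((i : ℝ) + k + n))
      atTop (nhds 0) :=
  stmt_14_general r hr0 hr1 n
end

section
/- Let λ, μ, γ > 0, ξ > 0, 𝔫 ≥ 1. For the recurrence a_0 = 0, λ(i+𝔫)a_{i+1} = −ξ + (λ+μ+γ)(i+𝔫)a_i − μ(i+𝔫)a_{i-1}, there exists â > 0 such that: for every initial value a_1 > â the solution tends to +∞, and for every a_1 < â the solution tends to −∞. -/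
open Filter

/-!
Write `Δᵢ = aᵢ₊₁ - aᵢ`. Divided by `i + 1 + 𝔫`, the recurrence reads
`λ Δᵢ₊₁ = μ Δᵢ + γ aᵢ₊₁ - ξ / (i + 1 + 𝔫)`, and the forcing term lies in `[0, ξ]`.
Hence once a solution has made a non-negative step to a value above `ξ / γ`, every later step is at
least `(γ aⱼ₊₁ - ξ) / λ > 0` and it tends to `+∞`; symmetrically, once it has made a non-positive
step to a negative value it tends to `-∞`.

The solutions with `a₀ = 0` form the line `p + t u`, where `u` is the homogeneous solution with
`u₀ = 0`, `u₁ = 1`, which itself tends to `+∞`, and `t = a₁`. The set of `t` whose solution tends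
to `-∞` contains small `t > 0` (then `a₂ < 0`) and is bounded by `ξ / γ`; `â` is its supremum.
Above `â` the solution dominates `(t - s) u` for a non-negative solution `p + s u`; below `â` it is
eventually dominated by a solution tending to `-∞`.
-/

lemma eq_zero_of_two_step_rec {R : Type*} [Semiring R] [NoZeroDivisors R] {A B C w : ℕ → R}
    (hA : ∀ i, A i ≠ 0) (h : ∀ i, A i * w (i + 2) = B i * w (i + 1) + C i * w i)
    (h0 : w 0 = 0) (h1 : w 1 = 0) (i : ℕ) : w i = 0 := by
  induction i using Nat.twoStepInduction with
  | zero => exact h0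
  | one => exact h1
  | more i hi hi1 =>
    have hw := h i
    rw [hi, hi1, mul_zero, mul_zero, add_zero] at hw
    exact (mul_eq_zero.1 hw).resolve_left (hA i)

lemma exists_le_lt_succ {α : Type*} [LinearOrder α] {u : ℕ → α} {c : α} (h0 : u 0 ≤ c) {m : ℕ}
    (hm : c < u m) : ∃ k, u k ≤ c ∧ c < u (k + 1) := by
  induction m with
  | zero => exact absurd h0 (not_le.2 hm)
  | succ m ih =>
    by_cases hcm : c < u m
    · exact ih hcm
    · exact ⟨m, not_lt.1 hcm, hm⟩

section Drift

variable {lm mu gm F : ℝ} {a : ℕ → ℝ} {j : ℕ}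

lemma drift_lower_bounds (hlm : 0 < lm) (hmu : 0 ≤ mu) (hgm : 0 ≤ gm)
    (h : ∀ i, mu * (a (i + 1) - a i) + gm * a (i + 1) - F ≤ lm * (a (i + 2) - a (i + 1)))
    (hj : a j ≤ a (j + 1)) (hF : F ≤ gm * a (j + 1)) (m : ℕ) :
    a (j + 1) + m * ((gm * a (j + 1) - F) / lm) ≤ a (j + m + 1) ∧
      (gm * a (j + 1) - F) / lm ≤ a (j + m + 2) - a (j + m + 1) := by
  set d := (gm * a (j + 1) - F) / lm with hd
  have hd0 : 0 ≤ d := div_nonneg (by linarith) hlm.le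
  have step : ∀ k, a (j + 1) ≤ a (k + 1) → a k ≤ a (k + 1) → d ≤ a (k + 2) - a (k + 1) := by
    intro k hB hk
    rw [hd, div_le_iff₀ hlm]
    nlinarith [h k, mul_le_mul_of_nonneg_left hB hgm, mul_nonneg hmu (sub_nonneg.2 hk)]
  induction m with
  | zero => simpa using step j le_rfl hj
  | succ m ih =>
    have hup : a (j + m + 1) + d ≤ a (j + m + 2) := by linarith [ih.2]
    have hB : a (j + 1) + (m + 1 : ℕ) * d ≤ a (j + m + 2) := by push_cast; linarith [ih.1]
    refine ⟨hB, step (j + m + 1) ?_ (by linarith)⟩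
    nlinarith [mul_nonneg (Nat.cast_nonneg (α := ℝ) (m + 1)) hd0]

lemma tendsto_atTop_of_drift (hlm : 0 < lm) (hmu : 0 ≤ mu) (hgm : 0 ≤ gm)
    (h : ∀ i, mu * (a (i + 1) - a i) + gm * a (i + 1) - F ≤ lm * (a (i + 2) - a (i + 1)))
    (hj : a j ≤ a (j + 1)) (hF : F < gm * a (j + 1)) : Tendsto a atTop atTop := by
  have hd : 0 < (gm * a (j + 1) - F) / lm := div_pos (by linarith) hlm
  have hlin : Tendsto (fun m : ℕ => a (j + 1) + m * ((gm * a (j + 1) - F) / lm)) atTop atTop :=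
    tendsto_atTop_add_const_left _ _ (tendsto_natCast_atTop_atTop.atTop_mul_const hd)
  refine (tendsto_add_atTop_iff_nat (j + 1)).1 (tendsto_atTop_mono (fun m => ?_) hlin)
  rw [show m + (j + 1) = j + m + 1 by omega]
  exact (drift_lower_bounds hlm hmu hgm h hj hF.le m).1

lemma tendsto_atTop_of_drift_of_lt (hlm : 0 < lm) (hmu : 0 ≤ mu) (hgm : 0 < gm)
    (h : ∀ i, mu * (a (i + 1) - a i) + gm * a (i + 1) - F ≤ lm * (a (i + 2) - a (i + 1)))
    (h0 : gm * a 0 ≤ F) {m : ℕ} (hm : F < gm * a m) : Tendsto a atTop atTop := by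
  obtain ⟨k, hk, hk1⟩ := exists_le_lt_succ (u := fun i => gm * a i) h0 hm
  exact tendsto_atTop_of_drift hlm hmu hgm.le h (le_of_mul_le_mul_left (hk.trans hk1.le) hgm) hk1

end Drift

def IsRecSolution (lm mu gm xi : ℝ) (n : ℕ) (a : ℕ → ℝ) : Prop :=
  ∀ i : ℕ, lm * ((i : ℝ) + 1 + n) * a (i + 2) =
    -xi + (lm + mu + gm) * ((i : ℝ) + 1 + n) * a (i + 1) - mu * ((i : ℝ) + 1 + n) * a i

namespace IsRecSolution

variable {lm mu gm xi : ℝ} {n : ℕ} {a b : ℕ → ℝ}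

lemma eq_of_initial (ha : IsRecSolution lm mu gm xi n a) (hb : IsRecSolution lm mu gm xi n b)
    (hlm : lm ≠ 0) (h0 : a 0 = b 0) (h1 : a 1 = b 1) : a = b := by
  funext i
  refine sub_eq_zero.1 (eq_zero_of_two_step_rec (w := a - b)
    (A := fun i => lm * ((i : ℝ) + 1 + n)) (B := fun i => (lm + mu + gm) * ((i : ℝ) + 1 + n))
    (C := fun i => -(mu * ((i : ℝ) + 1 + n))) (fun i => mul_ne_zero hlm (by positivity))
    (fun i => ?_) (sub_eq_zero.2 h0) (sub_eq_zero.2 h1) i)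
  simp only [Pi.sub_apply]
  linear_combination ha i - hb i

lemma drift (h : IsRecSolution lm mu gm xi n a) (i : ℕ) :
    ((i : ℝ) + 1 + n) * (lm * (a (i + 2) - a (i + 1)) - (mu * (a (i + 1) - a i) + gm * a (i + 1)))
      = -xi := by
  linear_combination h i

lemma drift_ge (h : IsRecSolution lm mu gm xi n a) (hxi : 0 ≤ xi) (i : ℕ) :
    mu * (a (i + 1) - a i) + gm * a (i + 1) - xi ≤ lm * (a (i + 2) - a (i + 1)) := by
  have hc : (1 : ℝ) ≤ (i : ℝ) + 1 + n := by
    linarith [i.cast_nonneg (α := ℝ), n.cast_nonneg (α := ℝ)]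
  nlinarith [h.drift i]

lemma neg_drift_ge (h : IsRecSolution lm mu gm xi n a) (hxi : 0 ≤ xi) (i : ℕ) :
    mu * (-a (i + 1) - -a i) + gm * -a (i + 1) - 0 ≤ lm * (-a (i + 2) - -a (i + 1)) := by
  have hc : (0 : ℝ) < (i : ℝ) + 1 + n := by positivity
  nlinarith [h.drift i]

lemma tendsto_atTop (h : IsRecSolution lm mu gm xi n a) (hlm : 0 < lm) (hmu : 0 ≤ mu)
    (hgm : 0 < gm) (hxi : 0 ≤ xi) (h0 : a 0 = 0) {m : ℕ} (hm : xi < gm * a m) :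
    Tendsto a atTop atTop :=
  tendsto_atTop_of_drift_of_lt hlm hmu hgm (h.drift_ge hxi) (by simp [h0, hxi]) hm

lemma tendsto_atBot (h : IsRecSolution lm mu gm xi n a) (hlm : 0 < lm) (hmu : 0 ≤ mu)
    (hgm : 0 < gm) (hxi : 0 ≤ xi) (h0 : a 0 = 0) {m : ℕ} (hm : a m < 0) :
    Tendsto a atTop atBot := by
  rw [← tendsto_neg_atTop_iff]
  exact tendsto_atTop_of_drift_of_lt (F := 0) hlm hmu hgm (h.neg_drift_ge hxi) (by simp [h0])
    (mul_pos hgm (neg_pos.2 hm))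

lemma mul_apply_one_le_of_tendsto_atBot (h : IsRecSolution lm mu gm xi n a) (hlm : 0 < lm)
    (hmu : 0 ≤ mu) (hgm : 0 < gm) (hxi : 0 ≤ xi) (h0 : a 0 = 0) (hbot : Tendsto a atTop atBot) :
    gm * a 1 ≤ xi :=
  not_lt.1 fun h1 => (h.tendsto_atTop hlm hmu hgm hxi h0 h1).not_tendsto disjoint_atTop_atBot hbot

lemma apply_two_neg (h : IsRecSolution lm mu gm xi n a) (hlm : 0 < lm) (h0 : a 0 = 0)
    (h1 : (lm + mu + gm) * (1 + n) * a 1 < xi) : a 2 < 0 := by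
  have h2 := h 0
  simp only [CharP.cast_eq_zero, zero_add, h0, mul_zero, sub_zero] at h2
  have hc : 0 < lm * (1 + n) := by positivity
  nlinarith

end IsRecSolution

noncomputable def homSol (lm mu gm : ℝ) : ℕ → ℝ
  | 0 => 0
  | 1 => 1
  | i + 2 => ((lm + mu + gm) * homSol lm mu gm (i + 1) - mu * homSol lm mu gm i) / lm

noncomputable def partSol (lm mu gm xi : ℝ) (n : ℕ) : ℕ → ℝ
  | 0 => 0
  | 1 => 0
  | i + 2 => (-xi + (lm + mu + gm) * ((i : ℝ) + 1 + n) * partSol lm mu gm xi n (i + 1)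
      - mu * ((i : ℝ) + 1 + n) * partSol lm mu gm xi n i) / (lm * ((i : ℝ) + 1 + n))

section Solutions

variable {lm mu gm xi : ℝ} {n : ℕ}

lemma homSol_rec (hlm : lm ≠ 0) (i : ℕ) :
    lm * homSol lm mu gm (i + 2) =
      (lm + mu + gm) * homSol lm mu gm (i + 1) - mu * homSol lm mu gm i :=
  mul_div_cancel₀ _ hlm

lemma tendsto_homSol (hlm : 0 < lm) (hmu : 0 ≤ mu) (hgm : 0 < gm) :
    Tendsto (homSol lm mu gm) atTop atTop :=
  tendsto_atTop_of_drift (j := 0) (F := 0) hlm hmu hgm.le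
    (fun i => by linarith [homSol_rec (mu := mu) (gm := gm) hlm.ne' i]) (by simp [homSol])
    (by simp [homSol, hgm])

noncomputable def initSol (lm mu gm xi : ℝ) (n : ℕ) (t : ℝ) (i : ℕ) : ℝ :=
  partSol lm mu gm xi n i + t * homSol lm mu gm i

@[simp] lemma initSol_zero (t : ℝ) : initSol lm mu gm xi n t 0 = 0 := by
  simp [initSol, partSol, homSol]

@[simp] lemma initSol_one (t : ℝ) : initSol lm mu gm xi n t 1 = t := by
  simp [initSol, partSol, homSol]

lemma initSol_eq_add (t s : ℝ) (i : ℕ) :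
    initSol lm mu gm xi n t i = initSol lm mu gm xi n s i + (t - s) * homSol lm mu gm i := by
  simp only [initSol]
  ring

lemma isRecSolution_initSol (hlm : lm ≠ 0) (t : ℝ) :
    IsRecSolution lm mu gm xi n (initSol lm mu gm xi n t) := by
  intro i
  have hp : lm * ((i : ℝ) + 1 + n) * partSol lm mu gm xi n (i + 2) =
      -xi + (lm + mu + gm) * ((i : ℝ) + 1 + n) * partSol lm mu gm xi n (i + 1)
        - mu * ((i : ℝ) + 1 + n) * partSol lm mu gm xi n i :=
    mul_div_cancel₀ _ (mul_ne_zero hlm (by positivity))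
  simp only [initSol]
  linear_combination hp + t * ((i : ℝ) + 1 + n) * homSol_rec (mu := mu) (gm := gm) hlm i

lemma IsRecSolution.eq_initSol {a : ℕ → ℝ} (h : IsRecSolution lm mu gm xi n a) (hlm : lm ≠ 0)
    (h0 : a 0 = 0) : a = initSol lm mu gm xi n (a 1) :=
  h.eq_of_initial (isRecSolution_initSol hlm (a 1)) hlm (by simp [h0]) (by simp)

lemma exists_pos_tendsto_initSol_atBot (hlm : 0 < lm) (hmu : 0 ≤ mu) (hgm : 0 < gm)
    (hxi : 0 < xi) :
    ∃ t, 0 < t ∧ Tendsto (initSol lm mu gm xi n t) atTop atBot := by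
  obtain ⟨t, ht, hsmall⟩ := exists_pos_mul_lt hxi ((lm + mu + gm) * (1 + n))
  have hsol := isRecSolution_initSol (mu := mu) (gm := gm) (xi := xi) (n := n) hlm.ne' t
  refine ⟨t, ht, hsol.tendsto_atBot hlm hmu hgm hxi.le (initSol_zero t) (m := 2) ?_⟩
  exact hsol.apply_two_neg hlm (initSol_zero t) (by simpa using hsmall)

lemma le_of_tendsto_initSol_atBot (hlm : 0 < lm) (hmu : 0 ≤ mu) (hgm : 0 < gm) (hxi : 0 ≤ xi)
    {t : ℝ} (ht : Tendsto (initSol lm mu gm xi n t) atTop atBot) : t ≤ xi / gm := by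
  rw [le_div_iff₀' hgm]
  simpa using (isRecSolution_initSol hlm.ne' t).mul_apply_one_le_of_tendsto_atBot hlm hmu hgm
    hxi (initSol_zero t) ht

end Solutions

theorem stmt_18_general (lm mu gm xi : ℝ) (hl : 0 < lm) (hm : 0 < mu) (hg : 0 < gm) (hxi : 0 < xi)
    (n : ℕ) :
    ∃ ahat : ℝ, 0 < ahat ∧
      ∀ a : ℕ → ℝ, a 0 = 0 →
        (∀ i : ℕ,
          lm * ((i : ℝ) + 1 + n) * a (i + 2)
            = -xi + (lm + mu + gm) * ((i : ℝ) + 1 + n) * a (i + 1)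
              - mu * ((i : ℝ) + 1 + n) * a i) →
        (ahat < a 1 → Tendsto a atTop atTop) ∧
        (a 1 < ahat → Tendsto a atTop atBot) := by
  set T := {t | Tendsto (initSol lm mu gm xi n t) atTop atBot}
  obtain ⟨t₀, ht₀, ht₀T⟩ := exists_pos_tendsto_initSol_atBot (n := n) hl hm.le hg hxi
  have hT : BddAbove T := ⟨xi / gm, fun _ ↦ le_of_tendsto_initSol_atBot hl hm.le hg hxi.le⟩
  have hu := tendsto_homSol hl hm.le hg
  refine ⟨sSup T, ht₀.trans_le (le_csSup hT ht₀T), fun a h0 ha => ?_⟩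
  have hrep : a = initSol lm mu gm xi n (a 1) :=
    IsRecSolution.eq_initSol (show IsRecSolution lm mu gm xi n a from ha) hl.ne' h0
  constructor
  · intro hlt
    obtain ⟨s, hTs, hs⟩ := exists_between hlt
    have hs0 : ∀ i, 0 ≤ initSol lm mu gm xi n s i := fun i => not_lt.1 fun hi => not_le.2 hTs
      (le_csSup hT ((isRecSolution_initSol hl.ne' s).tendsto_atBot hl hm.le hg hxi.le
        (initSol_zero s) hi))
    rw [hrep]
    refine tendsto_atTop_mono (fun i => ?_) (hu.const_mul_atTop (sub_pos.2 hs))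
    rw [initSol_eq_add (a 1) s]
    linarith [hs0 i]
  · intro hlt
    obtain ⟨s, hsT, hs⟩ := exists_lt_of_lt_csSup ⟨t₀, ht₀T⟩ hlt
    rw [hrep]
    refine tendsto_atBot_mono' _ ?_ hsT
    filter_upwards [hu.eventually_ge_atTop 0] with i hi
    rw [initSol_eq_add (a 1) s]
    nlinarith

theorem stmt_18 (lm mu gm xi : ℝ) (hl : 0 < lm) (hm : 0 < mu) (hg : 0 < gm) (hxi : 0 < xi)
    (n : ℕ) (hn : 1 ≤ n) :
    ∃ ahat : ℝ, 0 < ahat ∧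
      ∀ a : ℕ → ℝ, a 0 = 0 →
        (∀ i : ℕ,
          lm * ((i : ℝ) + 1 + n) * a (i + 2)
            = -xi + (lm + mu + gm) * ((i : ℝ) + 1 + n) * a (i + 1)
              - mu * ((i : ℝ) + 1 + n) * a i) →
        (ahat < a 1 → Tendsto a atTop atTop) ∧
        (a 1 < ahat → Tendsto a atTop atBot) :=
  stmt_18_general lm mu gm xi hl hm hg hxi n
end

section
/- Let λ, μ, γ > 0, ξ > 0, 𝔫 ≥ 1, and let (a_i') be a solution of a_0' = 0, λ(i+𝔫)a_{i+1}' = −ξ + (λ+μ+γ)(i+𝔫)a_i' − μ(i+𝔫)a_{i-1}' with a_i' > 0 for all i ≥ 1 that is unbounded. Then a_i' → +∞ as i → ∞. -/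
/-!
Put `p = i + 1 + n ≥ 1`. The recurrence can be rewritten as
`λ p (a_{i+2} - a_{i+1}) = (γ p a_{i+1} - ξ) + μ p (a_{i+1} - a_i)`,
so once `a_{i+1}` exceeds `max 0 (ξ / γ)` and `a_{i+1} > a_i`, also `a_{i+2} > a_{i+1}`.
An unbounded sequence must somewhere increase to a value above that threshold, and from
there on it increases forever; being unbounded, it tends to `+∞`.
-/

open Filter Set

theorem lt_of_affine_recurrence {lm mu gm xi C p x y z : ℝ} (hl : 0 < lm) (hm : 0 ≤ mu)
    (hg : 0 < gm) (hC : 0 ≤ C) (hCxi : xi ≤ gm * C) (hp : 1 ≤ p)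
    (hrec : lm * p * z = -xi + (lm + mu + gm) * p * y - mu * p * x)
    (hCy : C < y) (hxy : x < y) : y < z := by
  have hy : 0 < y := hC.trans_lt hCy
  have hgrowth : xi < gm * p * y := calc
    xi ≤ gm * C := hCxi
    _ < gm * y := by gcongr
    _ ≤ gm * p * y := by nlinarith [mul_pos hg hy]
  have hid : lm * p * (z - y) = (gm * p * y - xi) + mu * p * (y - x) := by
    linear_combination hrec
  have hdrift : 0 ≤ mu * p * (y - x) := by
    have : 0 ≤ p := zero_le_one.trans hp
    have : 0 ≤ y - x := sub_nonneg.2 hxy.le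
    positivity
  have hincr : 0 < lm * p * (z - y) := by rw [hid]; linarith
  exact sub_pos.1 (pos_of_mul_pos_right hincr (by positivity))

theorem exists_lt_succ_of_not_bddAbove {u : ℕ → ℝ} (hu : ¬BddAbove (range u)) (C : ℝ) :
    ∃ m, C < u (m + 1) ∧ u m < u (m + 1) := by
  by_contra! h
  refine hu ⟨max C (u 0), forall_mem_range.2 fun i => ?_⟩
  induction i with
  | zero => exact le_max_right _ _
  | succ i ih =>
    rcases le_or_gt (u (i + 1)) C with hle | hlt
    · exact hle.trans (le_max_left _ _)
    · exact (h i hlt).trans ih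

theorem not_bddAbove_range_comp_add {u : ℕ → ℝ} (hu : ¬BddAbove (range u)) (m : ℕ) :
    ¬BddAbove (range fun k => u (k + m)) := by
  intro hbdd
  refine hu (IsBoundedUnder.bddAbove_range ?_)
  have : IsBounded (· ≤ ·) (map (u ∘ (· + m)) atTop) := hbdd.isBoundedUnder_of_range
  rwa [← map_map, map_add_atTop_eq_nat] at this

theorem tendsto_atTop_of_not_bddAbove_of_increase_persists {u : ℕ → ℝ} {C : ℝ}
    (hu : ¬BddAbove (range u))
    (hpersist : ∀ i, C < u (i + 1) → u i < u (i + 1) → u (i + 1) < u (i + 2)) :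
    Tendsto u atTop atTop := by
  obtain ⟨m, hCm, hm⟩ := exists_lt_succ_of_not_bddAbove hu C
  have hincr : ∀ k, C < u (k + m + 1) ∧ u (k + m) < u (k + m + 1) := by
    intro k
    induction k with
    | zero => simpa using ⟨hCm, hm⟩
    | succ k ih =>
      have hnext := hpersist (k + m) ih.1 ih.2
      rw [show k + 1 + m = k + m + 1 by omega]
      exact ⟨ih.1.trans hnext, hnext⟩
  rw [← tendsto_add_atTop_iff_nat m]
  exact tendsto_atTop_atTop_of_monotone'
    (monotone_nat_of_le_succ fun k => by simpa [add_right_comm] using (hincr k).2.le)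
    (not_bddAbove_range_comp_add hu m)

theorem stmt_19_general (lm mu gm xi : ℝ) (hl : 0 < lm) (hm : 0 < mu) (hg : 0 < gm)
    (n : ℕ) (a : ℕ → ℝ)
    (hrec : ∀ i : ℕ,
      lm * ((i : ℝ) + 1 + n) * a (i + 2)
        = -xi + (lm + mu + gm) * ((i : ℝ) + 1 + n) * a (i + 1)
          - mu * ((i : ℝ) + 1 + n) * a i)
    (hunbdd : ¬∃ C : ℝ, ∀ i : ℕ, a i ≤ C) :
    Tendsto a atTop atTop := by
  have hu : ¬BddAbove (range a) := fun ⟨C, hC⟩ => hunbdd ⟨C, forall_mem_range.1 hC⟩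
  refine tendsto_atTop_of_not_bddAbove_of_increase_persists (C := max 0 (xi / gm)) hu
    fun i hCi hi => lt_of_affine_recurrence hl hm.le hg (le_max_left _ _) ?_ ?_ (hrec i) hCi hi
  · rw [← div_le_iff₀' hg]
    exact le_max_right _ _
  · have : (0 : ℝ) ≤ i + n := by positivity
    linarith

theorem stmt_19 (lm mu gm xi : ℝ) (hl : 0 < lm) (hm : 0 < mu) (hg : 0 < gm) (hxi : 0 < xi)
    (n : ℕ) (hn : 1 ≤ n) (a : ℕ → ℝ) (h0 : a 0 = 0)
    (hrec : ∀ i : ℕ,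
      lm * ((i : ℝ) + 1 + n) * a (i + 2)
        = -xi + (lm + mu + gm) * ((i : ℝ) + 1 + n) * a (i + 1)
          - mu * ((i : ℝ) + 1 + n) * a i)
    (hpos : ∀ i : ℕ, 1 ≤ i → 0 < a i)
    (hunbdd : ¬∃ C : ℝ, ∀ i : ℕ, a i ≤ C) :
    Tendsto a atTop atTop :=
  stmt_19_general lm mu gm xi hl hm hg n a hrec hunbdd
end
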